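/- There exists an initialized infinite computation π of the broadcast network with Fin(π) ≠ ∅ if and only if there exist pairwise distinct states s_1, …, s_m ∈ Q (m ≤ |Q|) with {s_1, …, s_m} ∩ F ≠ ∅, a configuration c with Set(c) = {s_1, …, s_m} reachable from some initial configuration, and a cycle ({s_1}, …, {s_m}) →_G^+ ({s_1}, …, {s_m}) in the graph G. -/

import Mathlib

/-
A run in which some client visits `F` infinitely often repeats a configuration `c` at two such
visits. Grouping the clients by their state in `c`, every step of the run projects to an edge of
`G` between the tuples of states held by the groups, so the run between the two visits projects
to a cycle through the tuple of singletons.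

Conversely, replace every client of the reachable configuration by many copies, grouped by their
original state. If every state of every group is held by at least `|Q × Bool| * L` clients, give
`L` of them each possible move (a target state, and whether it is reached by sending): one
broadcast of the edge's sender, received by the clients whose move is a receive, followed by lone
sends of the other senders, realises an edge of `G`, after which every state of the new tuple is
held by at least `L` clients. Following the cycle brings the configuration back to itself, and the
reachable prefix followed by this cycle repeated forever is the required run.
-/

/-- Communication operations over a message domain `D`: send `!a` or receive `?a`. -/
inductive Op (D : Type) where
  | send : D → Op D
  | recv : D → Op D
  deriving DecidableEq

/-- One transition `c →_a c'` of the broadcast network with sender `i` and receivers `R`: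
the sender takes a send transition on `a`, every receiver takes a receive transition on `a`,
and all other clients stay idle. -/
def StepAt {D Q : Type} (δ : Set (Q × Op D × Q)) (a : D) {k : ℕ}
    (c c' : Fin k → Q) (i : Fin k) (R : Set (Fin k)) : Prop :=
  i ∉ R ∧ (c i, Op.send a, c' i) ∈ δ ∧
    (∀ j ∈ R, (c j, Op.recv a, c' j) ∈ δ) ∧
    (∀ j, j ∉ R → j ≠ i → c' j = c j)

/-- A transition `c → c'` of the broadcast network (for some message, sender and receivers). -/
def Step {D Q : Type} (δ : Set (Q × Op D × Q)) {k : ℕ} (c c' : Fin k → Q) : Prop :=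
  ∃ (a : D) (i : Fin k) (R : Set (Fin k)), StepAt δ a c c' i R

/-- `post_{?a}(S)`: successors of `S` under receive transitions on `a`. -/
def postRecv {D Q : Type} (δ : Set (Q × Op D × Q)) (a : D) (S : Set Q) : Set Q :=
  {r' | ∃ r ∈ S, (r, Op.recv a, r') ∈ δ}

/-- `enabled_{?a}(S)`: states of `S` where a receive of `a` is enabled. -/
def enabledRecv {D Q : Type} (δ : Set (Q × Op D × Q)) (a : D) (S : Set Q) : Set Q :=
  {r | r ∈ S ∧ (postRecv δ a {r}).Nonempty}

/-- The edge relation `V →_G V'` of the graph `G` on tuples of subsets of `Q`. -/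
def GEdge {D Q : Type} (δ : Set (Q × Op D × Q)) {m : ℕ} (V V' : Fin m → Set Q) : Prop :=
  ∃ (a : D) (j : Fin m) (s s' : Q), s ∈ V j ∧ s' ∈ V' j ∧ (s, Op.send a, s') ∈ δ ∧
    ∃ Gen Kill : Fin m → Set Q,
      (∀ i, Gen i ⊆ postRecv δ a (V i)) ∧
      (∀ i, Kill i ⊆ enabledRecv δ a (V i)) ∧
      (∀ i, i ≠ j → V' i = (V i \ Kill i) ∪ Gen i) ∧
      (∃ U : Set Q, (U = V j ∨ U = V j \ {s}) ∧ V' j = ((U \ Kill j) ∪ Gen j) ∪ {s'}) ∧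
      (∀ i, ∀ q ∈ Kill i, (postRecv δ a {q} ∩ Gen i).Nonempty)

open Relation Function

namespace Relation

variable {α : Type*} {r : α → α → Prop} {a b : α}

theorem TransGen.exists_path (h : TransGen r a b) :
    ∃ (n : ℕ) (f : ℕ → α), f 0 = a ∧ f (n + 1) = b ∧ ∀ i ≤ n, r (f i) (f (i + 1)) := by
  induction h using TransGen.head_induction_on with
  | @single a hab => exact ⟨0, fun | 0 => a | _ + 1 => b, rfl, rfl, fun | 0, _ => hab⟩
  | @head a c hac _ ih =>
    obtain ⟨n, f, rfl, hfn, hf⟩ := ih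
    refine ⟨n + 1, fun | 0 => a | i + 1 => f i, rfl, hfn, ?_⟩
    rintro (_ | i) hi
    exacts [hac, hf i (by omega)]

theorem TransGen.exists_recurrent_seq (h : TransGen r b b) :
    ∃ f : ℕ → α, f 0 = b ∧ (∀ n, r (f n) (f (n + 1))) ∧ ∀ N, ∃ n ≥ N, f n = b := by
  obtain ⟨p, f, hf0, hfp, hf⟩ := h.exists_path
  refine ⟨fun n => f (n % (p + 1)), by simpa using hf0, fun n => ?_,
    fun N => ⟨N * (p + 1), Nat.le_mul_of_pos_right N p.succ_pos, by simpa using hf0⟩⟩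
  have hlt : n % (p + 1) < p + 1 := Nat.mod_lt n (by omega)
  rcases Nat.lt_or_eq_of_le (Nat.le_of_lt_succ hlt) with hn | hn
  · have : (n + 1) % (p + 1) = n % (p + 1) + 1 := by
      rw [Nat.add_mod, Nat.mod_eq_of_lt (a := 1) (by omega), Nat.mod_eq_of_lt (by omega)]
    simpa only [this] using hf _ hn.le
  · have : (n + 1) % (p + 1) = 0 := by
      rw [Nat.add_mod, hn]
      rcases p with _ | p <;> simp
    simpa only [this, hf0, ← hfp, hn] using hf p le_rfl

theorem ReflTransGen.exists_recurrent_seq (hab : ReflTransGen r a b) (hb : TransGen r b b) :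
    ∃ f : ℕ → α, f 0 = a ∧ (∀ n, r (f n) (f (n + 1))) ∧ ∀ N, ∃ n ≥ N, f n = b := by
  induction hab using ReflTransGen.head_induction_on with
  | refl => exact hb.exists_recurrent_seq
  | @head a c hac _ ih =>
    obtain ⟨f, rfl, hf, hfb⟩ := ih
    refine ⟨fun | 0 => a | n + 1 => f n, rfl, fun | 0 => hac | n + 1 => hf n, fun N => ?_⟩
    obtain ⟨n, hn, hfn⟩ := hfb N
    exact ⟨n + 1, by omega, hfn⟩

end Relation

theorem le_ncard_of_injective {J : Type*} [Finite J] {S : Set J} {L : ℕ} (f : Fin L → J)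
    (hf : Injective f) (hS : ∀ ℓ, f ℓ ∈ S) : L ≤ S.ncard := by
  simpa [Set.ncard_range_of_injective hf] using Set.ncard_le_ncard (Set.range_subset_iff.2 hS)

theorem exists_label_le_ncard {J K Λ : Type*} [Fintype J] [Fintype Λ] [Nonempty Λ] (κ : J → K)
    {P : Set K} {L : ℕ} (h : ∀ p ∈ P, Fintype.card Λ * L ≤ {x | κ x = p}.ncard) :
    ∃ lab : J → Λ, ∀ p ∈ P, ∀ l, L ≤ {x | κ x = p ∧ lab x = l}.ncard := by
  classical
  have hfibre : ∀ p ∈ P, ∃ lab : J → Λ, ∀ l, L ≤ {x | κ x = p ∧ lab x = l}.ncard := by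
    intro p hp
    obtain ⟨e⟩ := Function.Embedding.nonempty_of_card_le (α := Λ × Fin L) (β := {x | κ x = p})
      (by simpa [← Nat.card_eq_fintype_card, Nat.card_fin] using h p hp)
    have he : Injective fun y => (e y : J) := Subtype.val_injective.comp e.injective
    refine ⟨extend (fun y => (e y : J)) Prod.fst fun _ => Classical.arbitrary Λ, fun l =>
      le_ncard_of_injective (fun ℓ => e (l, ℓ)) (fun ℓ ℓ' hℓ => congrArg Prod.snd (he hℓ))
        fun ℓ => ⟨(e (l, ℓ)).2, he.extend_apply _ _ (l, ℓ)⟩⟩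
  choose! lab hlab using hfibre
  refine ⟨fun x => lab (κ x) x, fun p hp l => (hlab p hp l).trans_eq ?_⟩
  congr 1
  ext x
  exact and_congr_right fun hx => by simp [hx]

theorem exists_surjective_comp_eq {α β γ : Type*} {s : α → γ} (hs : Injective s) {c : β → γ}
    (h : Set.range c = Set.range s) : ∃ g : β → α, Surjective g ∧ s ∘ g = c := by
  have hc : ∀ u, c u ∈ Set.range s := Set.range_subset_iff.1 h.subset
  choose g hg using hc
  refine ⟨g, fun i => ?_, funext hg⟩
  obtain ⟨u, hu⟩ := Set.range_subset_iff.1 h.symm.subset i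
  exact ⟨u, hs (by rw [hg, hu])⟩

theorem image_fiber_eq_singleton {α β γ : Type*} {s : α → γ} {g : β → α} (hg : Surjective g) :
    (fun i => (s ∘ g) '' {u | g u = i}) = fun i => {s i} := by
  funext i
  obtain ⟨u, rfl⟩ := hg i
  ext q
  simp only [Set.mem_image, Set.mem_ofPred_eq, comp_apply, Set.mem_singleton_iff]
  exact ⟨fun ⟨v, hv, hq⟩ => hv ▸ hq.symm, fun hq => ⟨u, rfl, hq.symm⟩⟩

section Network

variable {D Q : Type} {δ : Set (Q × Op D × Q)} {k m : ℕ}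

theorem step_update_of_send {c : Fin k → Q} {t : Fin k} {a : D} {q : Q}
    (h : (c t, Op.send a, q) ∈ δ) : Step δ c (update c t q) :=
  ⟨a, t, ∅, Set.notMem_empty t, by simpa using h, by simp,
    fun _ _ hu => update_of_ne hu _ _⟩

theorem reflTransGen_step_piecewise {c c' : Fin k → Q} (E : Finset (Fin k))
    (h : ∀ t ∈ E, ∃ a, (c t, Op.send a, c' t) ∈ δ) :
    ReflTransGen (Step δ) c (E.piecewise c' c) := by
  induction E using Finset.induction_on with
  | empty => simpa using ReflTransGen.refl
  | insert t E ht ih =>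
    obtain ⟨a, hta⟩ := h t (Finset.mem_insert_self t E)
    rw [Finset.piecewise_insert]
    refine (ih fun u hu => h u (Finset.mem_insert_of_mem hu)).tail (step_update_of_send (a := a) ?_)
    rwa [Finset.piecewise_eq_of_notMem _ _ _ ht]

/-- A client in state `r` may move to `μ.1` while `a` is broadcast: by sending `a` if `μ.2`,
and otherwise by receiving `a` or staying idle. -/
def RoundMove (δ : Set (Q × Op D × Q)) (a : D) (r : Q) (μ : Q × Bool) : Prop :=
  if μ.2 then (r, Op.send a, μ.1) ∈ δ else (r, Op.recv a, μ.1) ∈ δ ∨ μ.1 = r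

theorem transGen_step_of_roundMove {c : Fin k → Q} {a : D} (μ : Fin k → Q × Bool)
    (hμ : ∀ t, RoundMove δ a (c t) (μ t)) (hsender : ∃ t, (μ t).2 = true) :
    TransGen (Step δ) c (fun t => (μ t).1) := by
  obtain ⟨t₀, ht₀⟩ := hsender
  set E := Finset.univ.filter fun t => (μ t).2 = true ∧ t ≠ t₀
  -- `t₀` broadcasts to all receivers first; the remaining senders then send one at a time.
  have hbroadcast : Step δ c (E.piecewise c fun t => (μ t).1) := by
    refine ⟨a, t₀, {t | (μ t).2 = false ∧ (c t, Op.recv a, (μ t).1) ∈ δ}, by simp [ht₀], ?_, ?_, ?_⟩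
    · simpa [E, ht₀, RoundMove] using hμ t₀
    · rintro t ⟨ht, hrecv⟩
      simpa [E, ht] using hrecv
    · intro t hR ht
      by_cases hE : t ∈ E
      · simp [hE]
      · have hst : (μ t).2 = false := by simpa [E, ht] using hE
        have hmove : (c t, Op.recv a, (μ t).1) ∈ δ ∨ (μ t).1 = c t := by
          simpa [RoundMove, hst] using hμ t
        simpa [hE] using hmove.resolve_left fun hrecv => hR ⟨hst, hrecv⟩
  have hsends : ReflTransGen (Step δ) (E.piecewise c fun t => (μ t).1)
      (E.piecewise (fun t => (μ t).1) (E.piecewise c fun t => (μ t).1)) := by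
    refine reflTransGen_step_piecewise E fun t ht => ⟨a, ?_⟩
    have hst : (μ t).2 = true := (Finset.mem_filter.1 ht).2.1
    simpa [Finset.piecewise_eq_of_mem _ _ _ ht, RoundMove, hst] using hμ t
  rw [Finset.piecewise_idem_right, Finset.piecewise_same] at hsends
  exact TransGen.head' hbroadcast hsends

def replicate (M : ℕ) {α : Type*} (c : Fin k → α) : Fin (k * M) → α :=
  fun t => c (finProdFinEquiv.symm t).1

@[simp]
theorem replicate_finProdFinEquiv (M : ℕ) {α : Type*} (c : Fin k → α) (u : Fin k) (x : Fin M) :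
    replicate M c (finProdFinEquiv (u, x)) = c u := by
  simp only [replicate, Equiv.symm_apply_apply]

theorem Step.transGen_replicate {c c' : Fin k → Q} (h : Step δ c c') {M : ℕ} (hM : 0 < M) :
    TransGen (Step δ) (replicate M c) (replicate M c') := by
  obtain ⟨a, i, R, -, hsend, hrecv, hidle⟩ := h
  refine transGen_step_of_roundMove (a := a)
    (fun t => (c' (finProdFinEquiv.symm t).1, decide ((finProdFinEquiv.symm t).1 = i)))
    (fun t => ?_) ⟨finProdFinEquiv (i, ⟨0, hM⟩), by simp⟩
  obtain ⟨⟨u, x⟩, rfl⟩ := finProdFinEquiv.surjective t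
  by_cases hu : u = i
  · simpa [RoundMove, hu] using hsend
  · by_cases huR : u ∈ R
    · simp [RoundMove, hu, hrecv u huR]
    · simp [RoundMove, hu, hidle u huR hu]

/-- An edge of `G` whose sender moves from `s ∈ V j` to `s' ∈ V' j` on `a`, stated without the
witnesses `Gen` and `Kill`. -/
structure GEdgeAt (δ : Set (Q × Op D × Q)) (a : D) (j : Fin m) (s s' : Q)
    (V V' : Fin m → Set Q) : Prop where
  src_mem : s ∈ V j
  tgt_mem : s' ∈ V' j
  send_mem : (s, Op.send a, s') ∈ δ
  vanish : ∀ i, ∀ r ∈ V i, r ∉ V' i → (∃ γ ∈ V' i, (r, Op.recv a, γ) ∈ δ) ∨ (i = j ∧ r = s)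
  appear : ∀ i, ∀ q ∈ V' i, q ∈ V i ∨ q ∈ postRecv δ a (V i) ∨ (i = j ∧ q = s')

theorem GEdgeAt.gEdge {a : D} {j : Fin m} {s s' : Q} {V V' : Fin m → Set Q}
    (h : GEdgeAt δ a j s s' V V') : GEdge δ V V' := by
  classical
  set Gen : Fin m → Set Q := fun i => V' i ∩ postRecv δ a (V i)
  set Kill : Fin m → Set Q := fun i => {r ∈ V i | r ∉ V' i ∧ ∃ γ ∈ V' i, (r, Op.recv a, γ) ∈ δ}
  -- `s` is dropped from the `j`-th component exactly when it does not survive in `V' j`.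
  have hmem : ∀ i q, q ∈ V' i ↔
      (q ∈ V i ∧ q ∉ Kill i ∧ ¬(i = j ∧ q = s ∧ s ∉ V' j)) ∨ q ∈ Gen i ∨ (i = j ∧ q = s') := by
    intro i q
    constructor
    · intro hq
      rcases h.appear i q hq with hqV | hqG | hqs'
      exacts [Or.inl ⟨hqV, fun hK => hK.2.1 hq, by rintro ⟨rfl, rfl, hs⟩; exact hs hq⟩,
        Or.inr (Or.inl ⟨hq, hqG⟩), Or.inr (Or.inr hqs')]
    · rintro (⟨hqV, hqK, hqs⟩ | ⟨hq, -⟩ | ⟨rfl, rfl⟩)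
      · by_contra hq
        rcases h.vanish i q hqV hq with hγ | ⟨rfl, rfl⟩
        exacts [hqK ⟨hqV, hq, hγ⟩, hqs ⟨rfl, rfl, hq⟩]
      · exact hq
      · exact h.tgt_mem
  refine ⟨a, j, s, s', h.src_mem, h.tgt_mem, h.send_mem, Gen, Kill, fun i => Set.inter_subset_right,
    fun i r hr => ⟨hr.1, ?_⟩, fun i hij => ?_, ⟨if s ∈ V' j then V j else V j \ {s}, ?_, ?_⟩, ?_⟩
  · obtain ⟨γ, -, hrγ⟩ := hr.2.2
    exact ⟨γ, r, rfl, hrγ⟩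
  · ext q; rw [hmem]; simp [hij]
  · split_ifs <;> simp
  · ext q; rw [hmem]; split_ifs with hs <;> simp [hs] <;> tauto
  · rintro i r ⟨hr, -, γ, hγ, hrγ⟩
    exact ⟨γ, ⟨r, rfl, hrγ⟩, hγ, r, hr, hrγ⟩

theorem GEdgeAt.exists_roundMove {a : D} {j : Fin m} {s s' : Q} {V V' : Fin m → Set Q}
    (h : GEdgeAt δ a j s s' V V') : ∀ i, ∀ r ∈ V i, ∃ μ, RoundMove δ a r μ ∧ μ.1 ∈ V' i := by
  intro i r hr
  by_cases hr' : r ∈ V' i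
  · exact ⟨(r, false), by simp [RoundMove], hr'⟩
  rcases h.vanish i r hr hr' with ⟨γ, hγ, hrγ⟩ | ⟨rfl, rfl⟩
  · exact ⟨(γ, false), by simp [RoundMove, hrγ], hγ⟩
  · exact ⟨(s', true), by simpa [RoundMove] using h.send_mem, h.tgt_mem⟩

theorem GEdgeAt.exists_roundMove_to {a : D} {j : Fin m} {s s' : Q} {V V' : Fin m → Set Q}
    (h : GEdgeAt δ a j s s' V V') : ∀ i, ∀ q ∈ V' i, ∃ r ∈ V i, ∃ b, RoundMove δ a r (q, b) := by
  intro i q hq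
  rcases h.appear i q hq with hqV | ⟨r, hr, hrq⟩ | ⟨rfl, rfl⟩
  · exact ⟨q, hqV, false, by simp [RoundMove]⟩
  · exact ⟨r, hr, false, by simp [RoundMove, hrq]⟩
  · exact ⟨s, h.src_mem, true, by simpa [RoundMove] using h.send_mem⟩

theorem GEdge.exists_gEdgeAt {V V' : Fin m → Set Q} (h : GEdge δ V V') :
    ∃ a j s s', GEdgeAt δ a j s s' V V' := by
  obtain ⟨a, j, s, s', hs, hs', hsend, Gen, Kill, hGen, -, hV', ⟨U, hU, hVj⟩, hKill⟩ := h
  have hUV : U ⊆ V j := by rcases hU with rfl | rfl <;> simp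
  have hGenV' : ∀ i, Gen i ⊆ V' i := by
    intro i
    rcases eq_or_ne i j with rfl | hij
    · rw [hVj]; intro q hq; simp [hq]
    · rw [hV' i hij]; exact Set.subset_union_right
  refine ⟨a, j, s, s', ⟨hs, hs', hsend, fun i r hr hr' => ?_, fun i q hq => ?_⟩⟩
  · by_cases hrK : r ∈ Kill i
    · obtain ⟨γ, ⟨_, rfl, hrγ⟩, hγ⟩ := hKill i r hrK
      exact Or.inl ⟨γ, hGenV' i hγ, hrγ⟩
    rcases eq_or_ne i j with rfl | hij
    · refine Or.inr ⟨rfl, by_contra fun hrs => hr' ?_⟩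
      rw [hVj]
      rcases hU with rfl | rfl <;> simp [hr, hrK, hrs]
    · exact absurd (by rw [hV' i hij]; exact Or.inl ⟨hr, hrK⟩) hr'
  · rcases eq_or_ne i j with rfl | hij
    · rw [hVj] at hq
      rcases hq with (⟨hqU, -⟩ | hqG) | rfl
      exacts [Or.inl (hUV hqU), Or.inr (Or.inl (hGen i hqG)), Or.inr (Or.inr ⟨rfl, rfl⟩)]
    · rw [hV' i hij] at hq
      rcases hq with ⟨hqV, -⟩ | hqG
      exacts [Or.inl hqV, Or.inr (Or.inl (hGen i hqG))]

theorem gEdge_iff_exists_gEdgeAt {V V' : Fin m → Set Q} :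
    GEdge δ V V' ↔ ∃ a j s s', GEdgeAt δ a j s s' V V' :=
  ⟨GEdge.exists_gEdgeAt, fun ⟨_, _, _, _, h⟩ => h.gEdge⟩

theorem Step.gEdge_image {c c' : Fin k → Q} (h : Step δ c c') (g : Fin k → Fin m) :
    GEdge δ (fun i => c '' {t | g t = i}) (fun i => c' '' {t | g t = i}) := by
  obtain ⟨a, t₀, R, -, hsend, hrecv, hidle⟩ := h
  refine (GEdgeAt.gEdge (a := a) (j := g t₀) (s := c t₀) (s' := c' t₀)
    ⟨⟨t₀, rfl, rfl⟩, ⟨t₀, rfl, rfl⟩, hsend, ?_, ?_⟩)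
  · rintro _ _ ⟨t, rfl, rfl⟩ hnot
    by_cases ht₀ : t = t₀
    · exact Or.inr (by simp [ht₀])
    by_cases htR : t ∈ R
    · exact Or.inl ⟨c' t, ⟨t, rfl, rfl⟩, hrecv t htR⟩
    · exact absurd ⟨t, rfl, hidle t htR ht₀⟩ hnot
  · rintro _ _ ⟨t, rfl, rfl⟩
    by_cases ht₀ : t = t₀
    · exact Or.inr (Or.inr (by simp [ht₀]))
    by_cases htR : t ∈ R
    · exact Or.inr (Or.inl ⟨c t, ⟨t, rfl, rfl⟩, hrecv t htR⟩)
    · exact Or.inl ⟨t, rfl, (hidle t htR ht₀).symm⟩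

def Populates (g : Fin k → Fin m) (V : Fin m → Set Q) (L : ℕ) (c : Fin k → Q) : Prop :=
  (∀ t, c t ∈ V (g t)) ∧ ∀ i, ∀ q ∈ V i, L ≤ {t | g t = i ∧ c t = q}.ncard

theorem Populates.mono {g : Fin k → Fin m} {V : Fin m → Set Q} {L L' : ℕ} {c : Fin k → Q}
    (h : Populates g V L c) (hL : L' ≤ L) : Populates g V L' c :=
  ⟨h.1, fun i q hq => hL.trans (h.2 i q hq)⟩

theorem GEdge.simulate [Fintype Q] {V V' : Fin m → Set Q} (hE : GEdge δ V V') {L : ℕ}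
    (hL : 0 < L) {g : Fin k → Fin m} {c : Fin k → Q}
    (hc : Populates g V (Fintype.card (Q × Bool) * L) c) :
    ∃ c', TransGen (Step δ) c c' ∧ Populates g V' L c' := by
  classical
  obtain ⟨a, j, s, s', hE⟩ := hE.exists_gEdgeAt
  have : Nonempty Q := ⟨s⟩
  choose! fallback hfallback using hE.exists_roundMove
  obtain ⟨lab, hlab⟩ := exists_label_le_ncard (fun t => (g t, c t)) (P := {p | p.2 ∈ V p.1})
    (fun p hp => by simpa only [Prod.ext_iff] using hc.2 p.1 p.2 hp)
  set μ : Fin k → Q × Bool := fun t =>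
    if RoundMove δ a (c t) (lab t) ∧ (lab t).1 ∈ V' (g t) then lab t else fallback (g t) (c t)
  have hμ : ∀ t, RoundMove δ a (c t) (μ t) ∧ (μ t).1 ∈ V' (g t) := by
    intro t
    by_cases ht : RoundMove δ a (c t) (lab t) ∧ (lab t).1 ∈ V' (g t)
    · simp [μ, ht]
    · simpa [μ, ht] using hfallback (g t) (c t) (hc.1 t)
  have hcount : ∀ i r, r ∈ V i → ∀ q b, RoundMove δ a r (q, b) → q ∈ V' i →
      L ≤ {t | g t = i ∧ (μ t).1 = q}.ncard := by
    intro i r hr q b hrq hq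
    refine (hlab (i, r) hr (q, b)).trans (Set.ncard_le_ncard (t := {t | g t = i ∧ (μ t).1 = q}) ?_)
    rintro t ⟨ht, hlt⟩
    simp only [Prod.mk.injEq] at ht
    simp [μ, ht, hlt, hrq, hq]
  refine ⟨fun t => (μ t).1, transGen_step_of_roundMove μ (fun t => (hμ t).1) ?_,
    fun t => (hμ t).2, fun i q hq => ?_⟩
  · obtain ⟨t, ht, hlt⟩ :=
      (Set.ncard_pos (Set.toFinite _)).1 (hL.trans_le (hlab (j, s) hE.src_mem (s', true)))
    simp only [Prod.mk.injEq] at ht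
    exact ⟨t, by simp [μ, ht, hlt, RoundMove, hE.send_mem, hE.tgt_mem]⟩
  · obtain ⟨r, hr, b, hrq⟩ := hE.exists_roundMove_to i q hq
    exact hcount i r hr q b hrq hq

theorem simulate_transGen_gEdge [Fintype Q] {V W : Fin m → Set Q} (h : TransGen (GEdge δ) V W)
    {L : ℕ} (hL : 0 < L) : ∃ N, ∀ {k : ℕ} (g : Fin k → Fin m) (c : Fin k → Q), Populates g V N c →
      ∃ c', TransGen (Step δ) c c' ∧ Populates g W L c' := by
  induction h generalizing L with
  | single e => exact ⟨_, fun _ _ hc => e.simulate hL hc⟩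
  | tail _ e ih =>
    have hΛ : 0 < Fintype.card (Q × Bool) := by
      obtain ⟨-, -, s, -⟩ := e
      exact Fintype.card_pos_iff.2 ⟨(s, true)⟩
    obtain ⟨N, hN⟩ := ih (Nat.mul_pos hΛ hL)
    refine ⟨N, fun g c hc => ?_⟩
    obtain ⟨c₁, h₁, hc₁⟩ := hN g c hc
    obtain ⟨c₂, h₂, hc₂⟩ := e.simulate hL hc₁
    exact ⟨c₂, h₁.trans h₂, hc₂⟩

theorem populates_replicate {s : Fin m → Q} {g : Fin k → Fin m} (hg : Surjective g) (M : ℕ) :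
    Populates (replicate M g) (fun i => {s i}) M (s ∘ replicate M g) := by
  refine ⟨fun t => rfl, fun i q hq => ?_⟩
  obtain ⟨u, rfl⟩ := hg i
  refine le_ncard_of_injective (fun x => finProdFinEquiv (u, x))
    (fun x y hxy => congrArg Prod.snd (finProdFinEquiv.injective hxy)) fun x => ?_
  simp only [Set.mem_singleton_iff] at hq
  simp [hq]

theorem Populates.eq_comp {s : Fin m → Q} {g : Fin k → Fin m} {L : ℕ} {c : Fin k → Q}
    (h : Populates g (fun i => {s i}) L c) : c = s ∘ g :=
  funext h.1

def HasLiveRun (δ : Set (Q × Op D × Q)) (I F : Set Q) : Prop :=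
  ∃ (k : ℕ) (cfg : ℕ → Fin k → Q), (∀ t, cfg 0 t ∈ I) ∧ (∀ j, Step δ (cfg j) (cfg (j + 1))) ∧
    {i : Fin k | ∀ N, ∃ j ≥ N, cfg j i ∈ F}.Nonempty

def HasLiveGCycle [Fintype Q] (δ : Set (Q × Op D × Q)) (I F : Set Q) : Prop :=
  ∃ (m : ℕ) (s : Fin m → Q), Injective s ∧ m ≤ Fintype.card Q ∧ (Set.range s ∩ F).Nonempty ∧
    (∃ (k : ℕ) (c₀ c : Fin k → Q), (∀ t, c₀ t ∈ I) ∧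
      ReflTransGen (Step δ) c₀ c ∧ Set.range c = Set.range s) ∧
    TransGen (GEdge δ) (fun i => ({s i} : Set Q)) (fun i => {s i})

theorem HasLiveRun.hasLiveGCycle [Fintype Q] {I F : Set Q} (h : HasLiveRun δ I F) :
    HasLiveGCycle δ I F := by
  obtain ⟨k, cfg, hinit, hstep, t, ht⟩ := h
  obtain ⟨j₀, hj₀, j₁, -, hlt, hcfg⟩ :=
    (Nat.frequently_atTop_iff_infinite.1 (Filter.frequently_atTop.2 ht)).exists_lt_map_eq_of_mapsTo
      (Set.mapsTo_univ cfg _) Set.finite_univ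
  obtain ⟨m, s, hs⟩ := (Set.finite_range (cfg j₀)).fin_embedding
  obtain ⟨g, hg, hsg⟩ := exists_surjective_comp_eq s.injective hs.symm
  refine ⟨m, s, s.injective, by simpa using Fintype.card_le_of_injective s s.injective,
    ⟨cfg j₀ t, hs ▸ Set.mem_range_self t, hj₀⟩,
    ⟨k, cfg 0, cfg j₀, hinit, Nat.rel_of_forall_rel_succ_of_le (ReflTransGen (Step δ))
      (fun j => ReflTransGen.single (hstep j)) (Nat.zero_le _), hs.symm⟩, ?_⟩
  have hcycle : TransGen (GEdge δ) (fun i => cfg j₀ '' {u | g u = i})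
      (fun i => cfg j₁ '' {u | g u = i}) :=
    Nat.rel_of_forall_rel_succ_of_lt (TransGen (GEdge δ))
      (fun j => TransGen.single ((hstep j).gEdge_image g)) hlt
  rwa [← hcfg, ← hsg, image_fiber_eq_singleton hg] at hcycle

theorem HasLiveGCycle.hasLiveRun [Fintype Q] {I F : Set Q} (h : HasLiveGCycle δ I F) :
    HasLiveRun δ I F := by
  obtain ⟨m, s, hs, -, ⟨_, ⟨i, rfl⟩, hF⟩, ⟨k, c₀, c, hc₀, hreach, hc⟩, hcycle⟩ := h
  obtain ⟨g, hg, rfl⟩ := exists_surjective_comp_eq hs hc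
  obtain ⟨N, hN⟩ := simulate_transGen_gEdge hcycle one_pos
  obtain ⟨c', hcc', hc'⟩ := hN _ _ ((populates_replicate (s := s) hg (N + 1)).mono N.le_succ)
  rw [hc'.eq_comp] at hcc'
  have hreach' : ReflTransGen (Step δ) (replicate (N + 1) c₀) (replicate (N + 1) (s ∘ g)) :=
    hreach.lift' (replicate (N + 1)) fun _ _ h => (h.transGen_replicate N.succ_pos).to_reflTransGen
  obtain ⟨cfg, hcfg₀, hcfg, hrec⟩ := hreach'.exists_recurrent_seq hcc'
  obtain ⟨u, rfl⟩ := hg i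
  refine ⟨k * (N + 1), cfg, fun t => hcfg₀ ▸ hc₀ _, hcfg, finProdFinEquiv (u, 0), fun n => ?_⟩
  obtain ⟨n', hn', hcfgn⟩ := hrec n
  exact ⟨n', hn', by simpa [hcfgn] using hF⟩

end Network

/-- There is an initialized infinite computation `π` of the broadcast network with
`Fin(π) ≠ ∅` iff there are pairwise distinct states `s 0, …, s (m-1)` (with `m ≤ |Q|`) such
that `{s 0, …, s (m-1)} ∩ F ≠ ∅`, some configuration `c` with `Set(c) = {s 0, …, s (m-1)}`
is reachable from an initial configuration, and there is a cycle
`({s 0}, …, {s (m-1)}) →_G⁺ ({s 0}, …, {s (m-1)})` in the graph `G`. -/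
theorem liveness_iff_graph_cycle {D Q : Type} [Fintype Q] (δ : Set (Q × Op D × Q))
    (I F : Set Q) :
    (∃ (k : ℕ) (cfg : ℕ → Fin k → Q),
      (∀ t, cfg 0 t ∈ I) ∧
      (∀ j, Step δ (cfg j) (cfg (j + 1))) ∧
      {i : Fin k | ∀ N, ∃ j ≥ N, cfg j i ∈ F}.Nonempty) ↔
    (∃ (m : ℕ) (s : Fin m → Q), Function.Injective s ∧ m ≤ Fintype.card Q ∧
      (Set.range s ∩ F).Nonempty ∧
      (∃ (k : ℕ) (c₀ c : Fin k → Q), (∀ t, c₀ t ∈ I) ∧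
        Relation.ReflTransGen (Step δ) c₀ c ∧ Set.range c = Set.range s) ∧
      Relation.TransGen (GEdge δ) (fun i => ({s i} : Set Q)) (fun i => {s i})) :=
  ⟨HasLiveRun.hasLiveGCycle, HasLiveGCycle.hasLiveRun⟩
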